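/- Let T be a strongly connected digraph on t ≥ 2 vertices and let K̄_2 denote the digraph with two vertices and no arcs. Then the composition Q = T[K̄_2, ..., K̄_2] (each H_i = K̄_2) has a good pair rooted at every vertex of Q. -/

import Mathlib

variable {V : Type*}

/-- A digraph (given by its arc relation) is strongly connected. -/
def Strong (A : V → V → Prop) : Prop :=
  ∀ x y : V, Relation.ReflTransGen A x y

/-- `B` is an out-branching of the digraph `A` rooted at `r`:
a spanning subdigraph in which every vertex is reachable from `r`,
every vertex other than `r` has in-degree exactly one, and `r` has in-degree zero. -/
def IsOutBranching (A B : V → V → Prop) (r : V) : Prop :=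
  (∀ x y, B x y → A x y) ∧
  (∀ v, Relation.ReflTransGen B r v) ∧
  (∀ v, v ≠ r → Nat.card {u : V // B u v} = 1) ∧
  (∀ u, ¬ B u r)

/-- `B` is an in-branching of the digraph `A` rooted at `r`. -/
def IsInBranching (A B : V → V → Prop) (r : V) : Prop :=
  (∀ x y, B x y → A x y) ∧
  (∀ v, Relation.ReflTransGen B v r) ∧
  (∀ v, v ≠ r → Nat.card {u : V // B v u} = 1) ∧
  (∀ u, ¬ B r u)

/-- A good pair rooted at `r`: arc-disjoint out- and in-branchings rooted at `r`. -/
def GoodPair (A : V → V → Prop) (r : V) : Prop :=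
  ∃ Bp Bm : V → V → Prop, IsOutBranching A Bp r ∧ IsInBranching A Bm r ∧
    ∀ x y, ¬ (Bp x y ∧ Bm x y)

/-- Arc relation of the composition `T[H_1, …, H_t]`. -/
def CompArc {t : ℕ} (T : Fin t → Fin t → Prop) (n : Fin t → ℕ)
    (H : ∀ i : Fin t, Fin (n i) → Fin (n i) → Prop)
    (x y : (i : Fin t) × Fin (n i)) : Prop :=
  (∃ h : x.1 = y.1, H y.1 (h ▸ x.2) y.2) ∨ (x.1 ≠ y.1 ∧ T x.1 y.1)

/-- A semicomplete digraph: some arc between every pair of distinct vertices. -/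
def Semicomplete {α : Type*} (T : α → α → Prop) : Prop :=
  ∀ x y : α, x ≠ y → T x y ∨ T y x

/-! Let `p` be a breadth-first out-tree and `p'` a breadth-first in-tree of `T` rooted at
the root's class `i₀`, and view `T[K̄₂, …, K̄₂]` as two layers, copies of `V(T)`. The
out-branching copies `p` inside each layer and the in-branching copies `p'` with every arc
switching layers, so the two share no arc; both hang their arcs at `i₀` on the root itself,
and the root's twin gets an arc from an in-neighbour, resp. to an out-neighbour, of `i₀`
(which exist as `t ≥ 2`). -/

/-- `par` is a parent function of a spanning tree of `A` rooted at `r`, the strictly decreasing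
`rank` witnessing that following parents always leads back to `r`. -/
def IsRankedParent (A : V → V → Prop) (r : V) (par : V → V) (rank : V → ℕ) : Prop :=
  ∀ v, v ≠ r → A (par v) v ∧ rank (par v) < rank v

def parentRel (r : V) (par : V → V) (x y : V) : Prop :=
  y ≠ r ∧ x = par y

theorem IsRankedParent.isOutBranching {A : V → V → Prop} {r : V} {par : V → V}
    {rank : V → ℕ} (h : IsRankedParent A r par rank) : IsOutBranching A (parentRel r par) r := by
  refine ⟨?_, fun v => ?_, fun v hv => ?_, fun u hu => hu.1 rfl⟩
  · rintro x y ⟨hy, rfl⟩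
    exact (h y hy).1
  · induction hn : rank v using Nat.strong_induction_on generalizing v with
    | _ n ih =>
      by_cases hv : v = r
      · rw [hv]
      · exact (ih _ (hn ▸ (h v hv).2) (par v) rfl).tail ⟨hv, rfl⟩
  · rw [Nat.card_eq_one_iff_unique]
    exact ⟨⟨fun a b => Subtype.ext (a.2.2.trans b.2.2.symm)⟩, ⟨⟨par v, hv, rfl⟩⟩⟩

theorem isInBranching_of_isOutBranching_swap {A B : V → V → Prop} {r : V}
    (h : IsOutBranching (Function.swap A) (Function.swap B) r) : IsInBranching A B r :=
  ⟨fun x y hB => h.1 y x hB, fun v => Relation.reflTransGen_swap.mp (h.2.1 v), h.2.2⟩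

def ReachIn (A : V → V → Prop) : ℕ → V → V → Prop
  | 0, x, y => x = y
  | n + 1, x, y => ∃ z, ReachIn A n x z ∧ A z y

theorem Relation.ReflTransGen.exists_reachIn {A : V → V → Prop} {x y : V}
    (h : Relation.ReflTransGen A x y) : ∃ n, ReachIn A n x y := by
  induction h with
  | refl => exact ⟨0, rfl⟩
  | tail _ hbc ih =>
    obtain ⟨n, hn⟩ := ih
    exact ⟨n + 1, _, hn, hbc⟩

/-- Parents along shortest paths, ranked by distance from the root. -/
theorem exists_isRankedParent {A : V → V → Prop} {r : V}
    (h : ∀ v, Relation.ReflTransGen A r v) : ∃ par rank, IsRankedParent A r par rank := by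
  classical
  have hreach : ∀ v, ∃ n, ReachIn A n r v := fun v => (h v).exists_reachIn
  have hstep : ∀ v, v ≠ r →
      ∃ u, A u v ∧ Nat.find (hreach u) < Nat.find (hreach v) := by
    intro v hv
    obtain ⟨n, hn⟩ : ∃ n, Nat.find (hreach v) = n + 1 := by
      refine Nat.exists_eq_succ_of_ne_zero fun h0 => hv ?_
      have hv0 := Nat.find_spec (hreach v)
      rw [h0] at hv0
      exact hv0.symm
    have hvn := Nat.find_spec (hreach v)
    rw [hn] at hvn
    obtain ⟨u, hu, huv⟩ := hvn
    exact ⟨u, huv, hn ▸ Nat.lt_succ_of_le (Nat.find_min' _ hu)⟩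
  choose! par hpar using hstep
  exact ⟨par, fun v => Nat.find (hreach v), hpar⟩

theorem Relation.ReflTransGen.exists_ne_rel {A : V → V → Prop} {a b : V}
    (h : Relation.ReflTransGen A a b) (hab : a ≠ b) : ∃ c, c ≠ a ∧ A a c := by
  induction h using Relation.ReflTransGen.head_induction_on with
  | refl => exact absurd rfl hab
  | @head a c hac _ ih =>
    by_cases hca : c = a
    · subst hca
      exact ih hab
    · exact ⟨c, hca, hac⟩

section Blowup

variable {t : ℕ}

/-- Lifts a parent function `p` of `T`, rooted at `r.1`, to `T[K̄₂, …, K̄₂]` rooted at `r`: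
the twin of `r` gets the parent `⟨q, 0⟩`, and `f` says how the layer changes along an arc. -/
def liftParent (p : Fin t → Fin t) (q : Fin t) (f : Fin 2 → Fin 2) (r : (_ : Fin t) × Fin 2)
    (v : (_ : Fin t) × Fin 2) : (_ : Fin t) × Fin 2 :=
  if v.1 = r.1 then ⟨q, 0⟩ else if p v.1 = r.1 then r else ⟨p v.1, f v.2⟩

def liftRank (d : Fin t → ℕ) (q : Fin t) (r : (_ : Fin t) × Fin 2)
    (v : (_ : Fin t) × Fin 2) : ℕ :=
  if v.1 = r.1 then (if v = r then 0 else d q + 2) else d v.1 + 1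

theorem IsRankedParent.lift {A : (_ : Fin t) × Fin 2 → (_ : Fin t) × Fin 2 → Prop}
    {T : Fin t → Fin t → Prop} {r : (_ : Fin t) × Fin 2} {p : Fin t → Fin t}
    {d : Fin t → ℕ} {q : Fin t} (f : Fin 2 → Fin 2) (hA : ∀ x y, x.1 ≠ y.1 → T x.1 y.1 → A x y)
    (hp : IsRankedParent T r.1 p d) (hq : q ≠ r.1) (hTq : T q r.1) :
    IsRankedParent A r (liftParent p q f r) (liftRank d q r) := by
  rintro ⟨j, c⟩ hv
  by_cases hj : j = r.1
  · subst hj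
    simp only [liftParent, liftRank, if_true, if_neg hv, if_neg hq]
    exact ⟨hA _ _ hq hTq, by omega⟩
  have ⟨hTj, hdj⟩ := hp j hj
  by_cases hpj : p j = r.1
  · simp only [liftParent, liftRank, if_neg hj, if_pos hpj, if_true]
    exact ⟨hA r _ (Ne.symm hj) (hpj ▸ hTj), by omega⟩
  · have hpj' : p j ≠ j := fun e => (e ▸ hdj).false
    simp only [liftParent, liftRank, if_neg hj, if_neg hpj]
    exact ⟨hA _ _ hpj' hTj, by omega⟩

/-- The out-branching keeps the layer while the in-branching switches it. -/
theorem parentRel_liftParent_disjoint {r : (_ : Fin t) × Fin 2} {p p' : Fin t → Fin t}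
    {q w : Fin t} {f : Fin 2 → Fin 2} (hf : ∀ c, f c ≠ c) (hq : q ≠ r.1)
    (x y : (_ : Fin t) × Fin 2) :
    ¬ (parentRel r (liftParent p q id r) x y ∧ parentRel r (liftParent p' w f r) y x) := by
  rintro ⟨⟨hy, rfl⟩, hx, hyx⟩
  obtain ⟨j, c⟩ := y
  by_cases hj : j = r.1
  · subst hj
    simp only [liftParent, if_true, if_neg hq] at hyx
    by_cases hp'q : p' q = r.1
    · rw [if_pos hp'q] at hyx
      exact hy hyx
    · rw [if_neg hp'q, Sigma.mk.inj_iff] at hyx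
      exact hp'q hyx.1.symm
  by_cases hpj : p j = r.1
  · simp only [liftParent, if_neg hj, if_pos hpj] at hx
    exact hx rfl
  simp only [liftParent, if_neg hj, if_neg hpj, id] at hyx
  by_cases hp'pj : p' (p j) = r.1
  · rw [if_pos hp'pj] at hyx
    exact hy hyx
  · rw [if_neg hp'pj, Sigma.mk.inj_iff] at hyx
    exact hf c (eq_of_heq hyx.2).symm

end Blowup

/-- If `T` is strong on `t ≥ 2` vertices, then the composition
`T[K̄₂,…,K̄₂]` (each factor the arcless two-vertex digraph) has a good pair
rooted at every vertex. -/
theorem stmt5 {t : ℕ} (ht : 2 ≤ t) (T : Fin t → Fin t → Prop)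
    (hT : Strong T)
    (r : (i : Fin t) × Fin ((fun _ : Fin t => 2) i)) :
    GoodPair (CompArc T (fun _ => 2) (fun _ _ _ => False)) r := by
  have : Nontrivial (Fin t) := Fin.nontrivial_iff_two_le.mpr ht
  obtain ⟨y, hy⟩ := exists_ne r.1
  have hT' : Strong (Function.swap T) := fun a b => Relation.reflTransGen_swap.mpr (hT b a)
  obtain ⟨p, d, hp⟩ := exists_isRankedParent (hT r.1)
  obtain ⟨p', d', hp'⟩ := exists_isRankedParent (hT' r.1)
  obtain ⟨q, hq, hTq⟩ := (hT' r.1 y).exists_ne_rel hy.symm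
  obtain ⟨w, hw, hTw⟩ := (hT r.1 y).exists_ne_rel hy.symm
  refine ⟨parentRel r (liftParent p q id r),
    Function.swap (parentRel r (liftParent p' w Fin.rev r)), ?_, ?_,
    fun x y => parentRel_liftParent_disjoint (by decide) hq x y⟩
  · exact (hp.lift id (fun x y hxy h => Or.inr ⟨hxy, h⟩) hq hTq).isOutBranching
  · exact isInBranching_of_isOutBranching_swap
      (hp'.lift Fin.rev (fun x y hxy h => Or.inr ⟨hxy.symm, h⟩) hw hTw).isOutBranching
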